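/- arXiv:2605.21232 — 5 statements merged into one kernel-verified Lean document; each statement's English description precedes it below -/
import Mathlib

section
/- If f : [0, 2π] → ℝ is continuous, nonnegative, and not identically zero, then (∫₀^{2π} f(t)cos t dt)² + (∫₀^{2π} f(t)sin t dt)² < (∫₀^{2π} f(t) dt)². -/
/-!
Write `A`, `B`, `I` for the three integrals. For a unit vector `(c, s)` one has
`c A + s B = ∫ f (c cos t + s sin t) dt` and `c cos t + s sin t ≤ 1`, with equality only where
`(cos t, sin t) = (c, s)`, i.e. at most once on a period. Since `f` is positive on a set of positive
measure, `c A + s B < I`; taking `(c, s)` in the direction of `(A, B)` gives `√(A² + B²) < I`.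
-/

open Set MeasureTheory intervalIntegral Real

section UnitVector

variable {c s : ℝ}

lemma mul_cos_add_mul_sin_le_one (hcs : c ^ 2 + s ^ 2 = 1) (x : ℝ) :
    c * cos x + s * sin x ≤ 1 := by
  nlinarith [sq_nonneg (c - cos x), sq_nonneg (s - sin x), sin_sq_add_cos_sq x]

lemma cos_eq_and_sin_eq_of_mul_cos_add_mul_sin_eq_one (hcs : c ^ 2 + s ^ 2 = 1) {x : ℝ}
    (h : c * cos x + s * sin x = 1) : cos x = c ∧ sin x = s := by
  have hsq : (cos x - c) ^ 2 + (sin x - s) ^ 2 = 0 := by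
    linear_combination sin_sq_add_cos_sq x + hcs - 2 * h
  constructor <;> nlinarith [sq_nonneg (cos x - c), sq_nonneg (sin x - s)]

lemma subsingleton_setOf_mul_cos_add_mul_sin_eq_one_inter_Ioc (hcs : c ^ 2 + s ^ 2 = 1)
    {a b : ℝ} (hb : b ≤ a + 2 * π) :
    ({x | c * cos x + s * sin x = 1} ∩ Ioc a b).Subsingleton := by
  rintro x ⟨hx, hxa, hxb⟩ y ⟨hy, hya, hyb⟩
  obtain ⟨hcx, hsx⟩ := cos_eq_and_sin_eq_of_mul_cos_add_mul_sin_eq_one hcs hx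
  obtain ⟨hcy, hsy⟩ := cos_eq_and_sin_eq_of_mul_cos_add_mul_sin_eq_one hcs hy
  have hcos : cos (x - y) = 1 := by
    rw [cos_sub, hcx, hsx, hcy, hsy]
    linear_combination hcs
  have := (cos_eq_one_iff_of_lt_of_lt (by linarith) (by linarith)).1 hcos
  linarith

lemma exists_mem_support_mul_cos_add_mul_sin_lt_one {f : ℝ → ℝ} {a b : ℝ}
    (hcs : c ^ 2 + s ^ 2 = 1) (hb : b ≤ a + 2 * π)
    (hf : 0 < volume (Function.support f ∩ Ioc a b)) :
    ∃ x ∈ Ioc a b, f x ≠ 0 ∧ c * cos x + s * sin x < 1 := by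
  have hnull : volume ({x | c * cos x + s * sin x = 1} ∩ Ioc a b) = 0 :=
    (subsingleton_setOf_mul_cos_add_mul_sin_eq_one_inter_Ioc hcs hb).measure_zero _
  rw [← measure_sdiff_null hnull] at hf
  obtain ⟨x, ⟨hfx, hxI⟩, hx⟩ := nonempty_of_measure_ne_zero hf.ne'
  have hne : c * cos x + s * sin x ≠ 1 := fun h => hx ⟨h, hxI⟩
  exact ⟨x, hxI, hfx, (mul_cos_add_mul_sin_le_one hcs x).lt_of_ne hne⟩

lemma integral_mul_mul_cos_add_mul_sin_lt_integral {f : ℝ → ℝ} {a b : ℝ}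
    (hcs : c ^ 2 + s ^ 2 = 1) (hab : a < b) (hb : b ≤ a + 2 * π)
    (hcont : ContinuousOn f (Icc a b)) (hpos : ∀ t ∈ Ioc a b, 0 ≤ f t)
    (hI : 0 < ∫ t in a..b, f t) :
    ∫ t in a..b, f t * (c * cos t + s * sin t) < ∫ t in a..b, f t := by
  have hnonneg : 0 ≤ᵐ[volume.restrict (uIoc a b)] f := by
    rw [uIoc_of_le hab.le]
    exact ae_restrict_of_forall_mem measurableSet_Ioc hpos
  have hsupp := ((integral_pos_iff_support_of_nonneg_ae' hnonneg
    (hcont.intervalIntegrable_of_Icc hab.le)).1 hI).2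
  obtain ⟨x, hxI, hfx, hx⟩ := exists_mem_support_mul_cos_add_mul_sin_lt_one hcs hb hsupp
  refine integral_lt_integral_of_continuousOn_of_le_of_exists_lt hab
    (hcont.mul (by fun_prop)) hcont (fun t ht => ?_) ⟨x, Ioc_subset_Icc_self hxI, ?_⟩
  · exact mul_le_of_le_one_right (hpos t ht) (mul_cos_add_mul_sin_le_one hcs t)
  · exact mul_lt_of_lt_one_right ((hpos x hxI).lt_of_ne' hfx) hx

end UnitVector

lemma sq_add_sq_lt_sq_of_forall_mul_add_mul_lt {A B I : ℝ}
    (h : ∀ c s : ℝ, c ^ 2 + s ^ 2 = 1 → c * A + s * B < I) : A ^ 2 + B ^ 2 < I ^ 2 := by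
  rcases (add_nonneg (sq_nonneg A) (sq_nonneg B)).eq_or_lt with hzero | hpos
  · nlinarith [h 1 0 (by norm_num), h (-1) 0 (by norm_num)]
  · set R := √(A ^ 2 + B ^ 2)
    have hR : 0 < R := sqrt_pos.2 hpos
    have hR2 : R ^ 2 = A ^ 2 + B ^ 2 := sq_sqrt hpos.le
    have hRI : R < I := by
      have hunit : (A / R) ^ 2 + (B / R) ^ 2 = 1 := by
        field_simp
        exact hR2.symm
      have hdir : A / R * A + B / R * B = R := by
        field_simp
        linear_combination -hR2
      simpa only [hdir] using h (A / R) (B / R) hunit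
    nlinarith

theorem strict_moment_inequality (f : ℝ → ℝ)
    (hcont : ContinuousOn f (Set.Icc (0 : ℝ) (2 * Real.pi)))
    (hpos : ∀ t ∈ Set.Icc (0 : ℝ) (2 * Real.pi), 0 ≤ f t)
    (hne : ∃ t ∈ Set.Icc (0 : ℝ) (2 * Real.pi), f t ≠ 0) :
    (∫ t in (0 : ℝ)..(2 * Real.pi), f t * Real.cos t) ^ 2 +
      (∫ t in (0 : ℝ)..(2 * Real.pi), f t * Real.sin t) ^ 2 <
      (∫ t in (0 : ℝ)..(2 * Real.pi), f t) ^ 2 := by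
  obtain ⟨t₀, ht₀, hft₀⟩ := hne
  have hpos' : ∀ t ∈ Ioc 0 (2 * π), 0 ≤ f t := fun t ht => hpos t (Ioc_subset_Icc_self ht)
  have hI : 0 < ∫ t in (0 : ℝ)..(2 * π), f t :=
    integral_pos two_pi_pos hcont hpos' ⟨t₀, ht₀, (hpos t₀ ht₀).lt_of_ne' hft₀⟩
  have hcos : IntervalIntegrable (fun t => f t * cos t) volume 0 (2 * π) :=
    (hcont.mul continuous_cos.continuousOn).intervalIntegrable_of_Icc two_pi_pos.le
  have hsin : IntervalIntegrable (fun t => f t * sin t) volume 0 (2 * π) :=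
    (hcont.mul continuous_sin.continuousOn).intervalIntegrable_of_Icc two_pi_pos.le
  refine sq_add_sq_lt_sq_of_forall_mul_add_mul_lt fun c s hcs => ?_
  calc _ = ∫ t in (0 : ℝ)..(2 * π), f t * (c * cos t + s * sin t) := by
        rw [← intervalIntegral.integral_const_mul, ← intervalIntegral.integral_const_mul,
          ← integral_add (hcos.const_mul c) (hsin.const_mul s)]
        congr 1 with t
        ring
    _ < _ := integral_mul_mul_cos_add_mul_sin_lt_integral hcs two_pi_pos (zero_add _).ge hcont
      hpos' hI
end

section
/- There do not exist a natural number N and nonnegative continuous functions a₁,…,a_N and b₁,…,b_N on [0, 2π] such that 1 + cos(s − t) = Σ_{k=1}^N a_k(s)·b_k(t) for all s, t ∈ [0, 2π]. -/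
theorem no_finite_nonneg_factorization :
    ¬ ∃ (N : ℕ) (a b : Fin N → ℝ → ℝ),
      (∀ k, ContinuousOn (a k) (Set.Icc (0 : ℝ) (2 * Real.pi)) ∧
            ContinuousOn (b k) (Set.Icc (0 : ℝ) (2 * Real.pi)) ∧
            (∀ s ∈ Set.Icc (0 : ℝ) (2 * Real.pi), 0 ≤ a k s) ∧
            (∀ t ∈ Set.Icc (0 : ℝ) (2 * Real.pi), 0 ≤ b k t)) ∧
      (∀ s ∈ Set.Icc (0 : ℝ) (2 * Real.pi), ∀ t ∈ Set.Icc (0 : ℝ) (2 * Real.pi),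
        1 + Real.cos (s - t) = ∑ k, a k s * b k t) := by
  classical
  rintro ⟨N, a, b, hk, heq⟩
  have hπ : (0 : ℝ) < Real.pi := Real.pi_pos
  set n : ℕ := 2 ^ N + 1 with hn
  have hnpos : (0 : ℝ) < (n : ℝ) := by positivity
  set c : ℝ := Real.pi / n with hc
  have hcpos : 0 < c := div_pos hπ hnpos
  -- points
  set u : Fin n → ℝ := fun i => (i : ℝ) * c with hu
  have hult : ∀ i : Fin n, u i < Real.pi := by
    intro i
    have : (i : ℝ) * c < (n : ℝ) * c := by
      apply mul_lt_mul_of_pos_right _ hcpos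
      exact_mod_cast i.is_lt
    simpa [hu, hc, mul_div_cancel₀ _ (ne_of_gt hnpos)] using this
  have hupos : ∀ i : Fin n, 0 ≤ u i := fun i => by positivity
  have humem : ∀ i : Fin n, u i ∈ Set.Icc (0 : ℝ) (2 * Real.pi) := by
    intro i
    exact ⟨hupos i, le_trans (hult i).le (by linarith)⟩
  have hvmem : ∀ i : Fin n, u i + Real.pi ∈ Set.Icc (0 : ℝ) (2 * Real.pi) := by
    intro i
    constructor
    · have := hupos i; linarith
    · have := hult i; linarith
  have huinj : Function.Injective u := by
    intro i j h
    have h' : ((i : ℕ) : ℝ) = ((j : ℕ) : ℝ) :=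
      mul_right_cancel₀ (ne_of_gt hcpos) h
    exact Fin.ext (by exact_mod_cast h')
  -- sum at (u j, u j + π) is zero
  have hzero : ∀ j : Fin n, ∑ k, a k (u j) * b k (u j + Real.pi) = 0 := by
    intro j
    have := heq (u j) (humem j) (u j + Real.pi) (hvmem j)
    rw [← this]
    have : u j - (u j + Real.pi) = -Real.pi := by ring
    rw [this, Real.cos_neg, Real.cos_pi]
    ring
  -- each term nonneg
  have hterm : ∀ (k : Fin N) (i j : Fin n), 0 ≤ a k (u i) * b k (u j + Real.pi) :=
    fun k i j => mul_nonneg ((hk k).2.2.1 _ (humem i)) ((hk k).2.2.2 _ (hvmem j))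
  -- fingerprint map
  set F : Fin n → Finset (Fin N) := fun i => Finset.univ.filter (fun k => 0 < a k (u i)) with hF
  have hFinj : Function.Injective F := by
    intro i j hij
    by_contra hne
    -- sum at (u i, u j + π) is positive
    have hcos : Real.cos (u i - (u j + Real.pi)) = - Real.cos (u i - u j) := by
      have : u i - (u j + Real.pi) = (u i - u j) - Real.pi := by ring
      rw [this, Real.cos_sub_pi]
    have hd1 : -(2 * Real.pi) < u i - u j := by
      have := hult i; have := hult j; have := hupos i; have := hupos j; linarith
    have hd2 : u i - u j < 2 * Real.pi := by
      have := hult i; have := hult j; have := hupos i; have := hupos j; linarith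
    have hcoslt : Real.cos (u i - u j) < 1 := by
      rcases lt_or_eq_of_le (Real.cos_le_one (u i - u j)) with h | h
      · exact h
      · exfalso
        have := (Real.cos_eq_one_iff_of_lt_of_lt hd1 hd2).1 h
        have : u i = u j := by linarith
        exact hne (huinj this)
    have hpos : 0 < ∑ k, a k (u i) * b k (u j + Real.pi) := by
      rw [← heq (u i) (humem i) (u j + Real.pi) (hvmem j), hcos]
      linarith
    obtain ⟨k, -, hkpos⟩ : ∃ k ∈ Finset.univ, 0 < a k (u i) * b k (u j + Real.pi) := by
      by_contra h
      push_neg at h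
      have : ∑ k, a k (u i) * b k (u j + Real.pi) ≤ 0 :=
        Finset.sum_nonpos fun k _ => h k (Finset.mem_univ k)
      linarith
    have hak : 0 < a k (u i) := by
      rcases (mul_pos_iff.1 hkpos) with ⟨h1, _⟩ | ⟨h1, _⟩
      · exact h1
      · exact absurd h1 (not_lt.2 ((hk k).2.2.1 _ (humem i)))
    have hbk : 0 < b k (u j + Real.pi) := by
      rcases (mul_pos_iff.1 hkpos) with ⟨_, h2⟩ | ⟨_, h2⟩
      · exact h2
      · exact absurd h2 (not_lt.2 ((hk k).2.2.2 _ (hvmem j)))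
    have hkFj : k ∈ F j := by
      rw [← hij]
      simp [hF, hak]
    have hajk : 0 < a k (u j) := by
      simp [hF] at hkFj; exact hkFj
    -- contradiction with zero sum at j
    have hle : a k (u j) * b k (u j + Real.pi) ≤ 0 := by
      have := Finset.single_le_sum (f := fun k => a k (u j) * b k (u j + Real.pi))
        (fun k _ => hterm k j j) (Finset.mem_univ k)
      rw [hzero j] at this
      simpa using this
    nlinarith [mul_pos hajk hbk]
  have hcard := Fintype.card_le_of_injective F hFinj
  simp [Fintype.card_finset] at hcard
  omega
end

section
/- For f ∈ C[0, 2π], the function Sf defined by (Sf)(s) = ∫₀^{2π} f(t)(1 + cos(s − t)) dt is nonnegative on [0, 2π] if and only if ∫₀^{2π} f(t) dt ≥ √((∫₀^{2π} f(t)cos t dt)² + (∫₀^{2π} f(t)sin t dt)²). -/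
/-!
Expanding `cos (s - t) = cos s cos t + sin s sin t` under the integral gives
`Sf s = A + B cos s + C sin s` with `A = ∫ f`, `B = ∫ f cos`, `C = ∫ f sin`. By Cauchy–Schwarz
`B cos s + C sin s ≥ -√(B² + C²)`, with equality when `(cos s, sin s)` points along `-(B, C)`,
and such an `s` can be taken in `[0, 2π]`; so `min Sf = A - √(B² + C²)`.
-/

open Real Set MeasureTheory

theorem integral_mul_one_add_cos_sub {f : ℝ → ℝ} {a b : ℝ}
    (hf : IntervalIntegrable f volume a b) (s : ℝ) :
    ∫ t in a..b, f t * (1 + cos (s - t)) =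
      (∫ t in a..b, f t) + cos s * (∫ t in a..b, f t * cos t) +
        sin s * ∫ t in a..b, f t * sin t := by
  have hcos := hf.mul_continuousOn continuous_cos.continuousOn
  have hsin := hf.mul_continuousOn continuous_sin.continuousOn
  have hexpand : ∀ t, f t * (1 + cos (s - t)) =
      f t + cos s * (f t * cos t) + sin s * (f t * sin t) := fun t => by
    rw [cos_sub]; ring
  simp_rw [hexpand]
  rw [intervalIntegral.integral_add (hf.add (hcos.const_mul _)) (hsin.const_mul _),
    intervalIntegral.integral_add hf (hcos.const_mul _),
    intervalIntegral.integral_const_mul, intervalIntegral.integral_const_mul]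

theorem Complex.exists_mem_Icc_norm_mul_cos_sin (z : ℂ) :
    ∃ θ ∈ Icc 0 (2 * π), ‖z‖ * Real.cos θ = z.re ∧ ‖z‖ * Real.sin θ = z.im := by
  have harg_lt := neg_pi_lt_arg z
  have harg_le := arg_le_pi z
  rcases le_or_gt 0 (arg z) with hnonneg | hneg
  · exact ⟨arg z, ⟨hnonneg, by linarith [pi_pos]⟩, norm_mul_cos_arg z, norm_mul_sin_arg z⟩
  · refine ⟨arg z + 2 * π, ⟨by linarith, by linarith⟩, ?_, ?_⟩
    · rw [Real.cos_add_two_pi, norm_mul_cos_arg]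
    · rw [Real.sin_add_two_pi, norm_mul_sin_arg]

theorem neg_sqrt_le_cos_mul_add_sin_mul (B C s : ℝ) :
    -√(B ^ 2 + C ^ 2) ≤ cos s * B + sin s * C := by
  have hsq : (cos s * B + sin s * C) ^ 2 ≤ B ^ 2 + C ^ 2 := by
    nlinarith [sin_sq_add_cos_sq s, sq_nonneg (B * sin s - C * cos s)]
  exact neg_le_of_abs_le (abs_le_sqrt hsq)

theorem exists_mem_Icc_cos_mul_add_sin_mul_eq_neg_sqrt (B C : ℝ) :
    ∃ θ ∈ Icc 0 (2 * π), cos θ * B + sin θ * C = -√(B ^ 2 + C ^ 2) := by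
  set z : ℂ := ⟨-B, -C⟩
  obtain ⟨θ, hθ, hre, him⟩ := z.exists_mem_Icc_norm_mul_cos_sin
  have hnorm : √(B ^ 2 + C ^ 2) = ‖z‖ := by
    rw [← sqrt_sq (norm_nonneg z), Complex.sq_norm, Complex.normSq_apply]
    congr 1; simp only [z]; ring
  refine ⟨θ, hθ, ?_⟩
  have hB : B = -(‖z‖ * cos θ) := by rw [hre]; simp only [z]; ring
  have hC : C = -(‖z‖ * sin θ) := by rw [him]; simp only [z]; ring
  rw [hnorm, hB, hC]
  linear_combination -‖z‖ * sin_sq_add_cos_sq θ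

theorem forall_mem_Icc_nonneg_add_cos_mul_add_sin_mul_iff (A B C : ℝ) :
    (∀ s ∈ Icc 0 (2 * π), 0 ≤ A + cos s * B + sin s * C) ↔ √(B ^ 2 + C ^ 2) ≤ A := by
  constructor
  · intro h
    obtain ⟨θ, hθ, hmin⟩ := exists_mem_Icc_cos_mul_add_sin_mul_eq_neg_sqrt B C
    linarith [h θ hθ]
  · intro h s _
    linarith [neg_sqrt_le_cos_mul_add_sin_mul B C s]

theorem Sf_nonneg_iff (f : ℝ → ℝ)
    (hcont : ContinuousOn f (Set.Icc (0 : ℝ) (2 * Real.pi))) :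
    (∀ s ∈ Set.Icc (0 : ℝ) (2 * Real.pi),
        0 ≤ ∫ t in (0 : ℝ)..(2 * Real.pi), f t * (1 + Real.cos (s - t))) ↔
      Real.sqrt ((∫ t in (0 : ℝ)..(2 * Real.pi), f t * Real.cos t) ^ 2 +
          (∫ t in (0 : ℝ)..(2 * Real.pi), f t * Real.sin t) ^ 2) ≤
        ∫ t in (0 : ℝ)..(2 * Real.pi), f t := by
  have hf : IntervalIntegrable f volume 0 (2 * π) :=
    (uIcc_of_le two_pi_pos.le ▸ hcont).intervalIntegrable
  simp_rw [integral_mul_one_add_cos_sub hf]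
  exact forall_mem_Icc_nonneg_add_cos_mul_add_sin_mul_iff _ _ _
end

section
/- For every (a, b, c) ∈ ℝ³ with c > √(a² + b²), there exists a continuous nonnegative function f on [0, 2π] such that ∫₀^{2π} f(t)cos t dt = a, ∫₀^{2π} f(t)sin t dt = b, and ∫₀^{2π} f(t) dt = c. -/
/-!
Write `a + ib = R e^{iθ}`. The kernels `(1 + cos t)^n` are nonnegative, their sine moment vanishes
(substitute `u = cos t`), and an integration by parts shows that their cosine moment is
`n / (n + 1)` times their mass. As `n / (n + 1) → 1` and `R < c`, for large `n` a multiple of the rotated kernel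
`(1 + cos (t - θ))^n` has trigonometric moments `(a, b)` and mass at most `c`; a nonnegative
constant makes up the missing mass without changing the trigonometric moments.
-/

open Real intervalIntegral

theorem Function.Periodic.intervalIntegral_comp_sub {g : ℝ → ℝ} {T : ℝ}
    (hg : Function.Periodic g T) (θ : ℝ) :
    ∫ t in (0 : ℝ)..T, g (t - θ) = ∫ t in (0 : ℝ)..T, g t := by
  rw [integral_comp_sub_right, zero_sub, show T - θ = -θ + T by ring]
  simpa using hg.intervalIntegral_add_eq (-θ) 0

theorem integral_const_mul_add_const_mul {g w : ℝ → ℝ} (hg : Continuous g) (hw : Continuous w)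
    (α β a b : ℝ) :
    ∫ t in a..b, (α * g t + β) * w t =
      α * (∫ t in a..b, g t * w t) + β * ∫ t in a..b, w t := by
  simp only [add_mul, mul_assoc]
  rw [integral_add, integral_const_mul, integral_const_mul]
  all_goals exact (by fun_prop : Continuous _).intervalIntegrable _ _

theorem integral_const_mul_add_const {g : ℝ → ℝ} (hg : Continuous g) (α β a b : ℝ) :
    ∫ t in a..b, (α * g t + β) = α * (∫ t in a..b, g t) + β * (b - a) := by
  simpa using integral_const_mul_add_const_mul hg (continuous_const (y := (1 : ℝ))) α β a b

section Rotation

variable {g : ℝ → ℝ}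

theorem integral_comp_sub_mul_cos (hg : Function.Periodic g (2 * π)) (hcont : Continuous g)
    (θ : ℝ) :
    ∫ t in (0 : ℝ)..2 * π, g (t - θ) * cos t =
      cos θ * (∫ t in (0 : ℝ)..2 * π, g t * cos t) -
        sin θ * ∫ t in (0 : ℝ)..2 * π, g t * sin t := by
  have hper : Function.Periodic (fun s => g s * cos (s + θ)) (2 * π) := fun s => by
    simp only [hg s, add_right_comm s, cos_add_two_pi]
  have hrot := hper.intervalIntegral_comp_sub θ
  simp only [sub_add_cancel] at hrot
  rw [hrot, ← integral_const_mul, ← integral_const_mul, ← integral_sub]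
  · simp only [cos_add]; congr 1; ext t; ring
  all_goals exact (by fun_prop : Continuous _).intervalIntegrable _ _

theorem integral_comp_sub_mul_sin (hg : Function.Periodic g (2 * π)) (hcont : Continuous g)
    (θ : ℝ) :
    ∫ t in (0 : ℝ)..2 * π, g (t - θ) * sin t =
      sin θ * (∫ t in (0 : ℝ)..2 * π, g t * cos t) +
        cos θ * ∫ t in (0 : ℝ)..2 * π, g t * sin t := by
  have hper : Function.Periodic (fun s => g s * sin (s + θ)) (2 * π) := fun s => by
    simp only [hg s, add_right_comm s, sin_add_two_pi]
  have hrot := hper.intervalIntegral_comp_sub θ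
  simp only [sub_add_cancel] at hrot
  rw [hrot, ← integral_const_mul, ← integral_const_mul, ← integral_add]
  · simp only [sin_add]; congr 1; ext t; ring
  all_goals exact (by fun_prop : Continuous _).intervalIntegrable _ _

end Rotation

theorem integral_comp_cos_mul_sin {h : ℝ → ℝ} (hh : Continuous h) :
    ∫ t in (0 : ℝ)..2 * π, h (cos t) * sin t = 0 := by
  have := integral_comp_mul_deriv (a := 0) (b := 2 * π) (fun t _ => hasDerivAt_cos t)
    (by fun_prop) hh
  simpa only [Function.comp_def, cos_zero, cos_two_pi, integral_same, mul_neg, integral_neg,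
    neg_eq_zero] using this

section CosineKernel

variable (n : ℕ)

theorem periodic_one_add_cos_pow : Function.Periodic (fun t => (1 + cos t) ^ n) (2 * π) :=
  fun t => by simp only [cos_add_two_pi]

theorem integral_one_add_cos_pow_pos : 0 < ∫ t in (0 : ℝ)..2 * π, (1 + cos t) ^ n := by
  rw [← zero_add (2 * π), ← (periodic_one_add_cos_pow n).intervalIntegral_add_eq (-π) 0,
    show -π + 2 * π = π by ring]
  refine intervalIntegral_pos_of_pos_on ((by fun_prop : Continuous _).intervalIntegrable _ _)
    (fun t ht => pow_pos ?_ n) (by linarith [pi_pos])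
  have : cos π < cos |t| :=
    cos_lt_cos_of_nonneg_of_le_pi (abs_nonneg t) le_rfl (abs_lt.2 ⟨ht.1, ht.2⟩)
  rw [cos_abs, cos_pi] at this
  linarith

theorem integral_one_add_cos_pow_mul_sin : ∫ t in (0 : ℝ)..2 * π, (1 + cos t) ^ n * sin t = 0 :=
  integral_comp_cos_mul_sin (h := fun x => (1 + x) ^ n) (by fun_prop)

theorem integral_one_add_cos_pow_mul_cos :
    ∫ t in (0 : ℝ)..2 * π, (1 + cos t) ^ n * cos t =
      n / (n + 1) * ∫ t in (0 : ℝ)..2 * π, (1 + cos t) ^ n := by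
  -- `sin² = (1 - cos)(1 + cos)` makes `((1 + cos)^n sin)'` a combination of the two integrands
  have hderiv : ∀ t ∈ Set.uIcc 0 (2 * π), HasDerivAt (fun t => (1 + cos t) ^ n * sin t)
      ((n + 1) * ((1 + cos t) ^ n * cos t) - n * (1 + cos t) ^ n) t := by
    intro t _
    refine ((((hasDerivAt_cos t).const_add 1).pow n).mul (hasDerivAt_sin t)).congr_deriv ?_
    rcases n with _ | m
    · simp
    · have hsin : sin t ^ 2 = (1 - cos t) * (1 + cos t) := by rw [sin_sq]; ring
      simp only [Nat.add_sub_cancel, Pi.pow_apply, pow_succ]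
      push_cast
      linear_combination (-(m + 1) : ℝ) * (1 + cos t) ^ m * hsin
  have hftc :=
    integral_eq_sub_of_hasDerivAt hderiv ((by fun_prop : Continuous _).intervalIntegrable _ _)
  rw [integral_sub, integral_const_mul, integral_const_mul] at hftc
  · simp only [sin_two_pi, sin_zero, mul_zero, sub_zero] at hftc
    rw [div_mul_eq_mul_div, eq_div_iff (by positivity)]
    linarith
  all_goals exact (by fun_prop : Continuous _).intervalIntegrable _ _

variable (θ : ℝ)

theorem integral_one_add_cos_sub_pow :
    ∫ t in (0 : ℝ)..2 * π, (1 + cos (t - θ)) ^ n = ∫ t in (0 : ℝ)..2 * π, (1 + cos t) ^ n :=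
  (periodic_one_add_cos_pow n).intervalIntegral_comp_sub θ

theorem integral_one_add_cos_sub_pow_mul_cos :
    ∫ t in (0 : ℝ)..2 * π, (1 + cos (t - θ)) ^ n * cos t =
      cos θ * (n / (n + 1) * ∫ t in (0 : ℝ)..2 * π, (1 + cos t) ^ n) := by
  rw [integral_comp_sub_mul_cos (periodic_one_add_cos_pow n) (by fun_prop),
    integral_one_add_cos_pow_mul_cos, integral_one_add_cos_pow_mul_sin, mul_zero, sub_zero]

theorem integral_one_add_cos_sub_pow_mul_sin :
    ∫ t in (0 : ℝ)..2 * π, (1 + cos (t - θ)) ^ n * sin t =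
      sin θ * (n / (n + 1) * ∫ t in (0 : ℝ)..2 * π, (1 + cos t) ^ n) := by
  rw [integral_comp_sub_mul_sin (periodic_one_add_cos_pow n) (by fun_prop),
    integral_one_add_cos_pow_mul_cos, integral_one_add_cos_pow_mul_sin, mul_zero, add_zero]

end CosineKernel

theorem exists_sqrt_mul_cos_eq_and_sqrt_mul_sin_eq (a b : ℝ) :
    ∃ θ, √(a ^ 2 + b ^ 2) * cos θ = a ∧ √(a ^ 2 + b ^ 2) * sin θ = b :=
  ⟨Complex.arg (a + b * Complex.I),
    by simpa [Complex.norm_add_mul_I] using Complex.norm_mul_cos_arg (a + b * Complex.I),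
    by simpa [Complex.norm_add_mul_I] using Complex.norm_mul_sin_arg (a + b * Complex.I)⟩

theorem exists_nat_mul_succ_div_le {R c : ℝ} (hR : 0 ≤ R) (h : R < c) :
    ∃ n : ℕ, (0 : ℝ) < n ∧ R * (n + 1) / n ≤ c := by
  obtain ⟨n, hn⟩ := exists_nat_gt (R / (c - R))
  have hn0 : (0 : ℝ) < n := (div_nonneg hR (by linarith)).trans_lt hn
  refine ⟨n, hn0, ?_⟩
  rw [div_le_iff₀ hn0]
  nlinarith [(div_lt_iff₀ (by linarith : 0 < c - R)).1 hn]

theorem exists_nonneg_with_moments (a b c : ℝ) (h : Real.sqrt (a ^ 2 + b ^ 2) < c) :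
    ∃ f : ℝ → ℝ, ContinuousOn f (Set.Icc (0 : ℝ) (2 * Real.pi)) ∧
      (∀ t ∈ Set.Icc (0 : ℝ) (2 * Real.pi), 0 ≤ f t) ∧
      (∫ t in (0 : ℝ)..(2 * Real.pi), f t * Real.cos t) = a ∧
      (∫ t in (0 : ℝ)..(2 * Real.pi), f t * Real.sin t) = b ∧
      (∫ t in (0 : ℝ)..(2 * Real.pi), f t) = c := by
  obtain ⟨θ, ha, hb⟩ := exists_sqrt_mul_cos_eq_and_sqrt_mul_sin_eq a b
  obtain ⟨n, hn, hRn⟩ := exists_nat_mul_succ_div_le (sqrt_nonneg _) h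
  set R := √(a ^ 2 + b ^ 2)
  set J := ∫ t in (0 : ℝ)..2 * π, (1 + cos t) ^ n
  have hJ : 0 < J := integral_one_add_cos_pow_pos n
  set α := R * (n + 1) / (n * J)
  set β := (c - α * J) / (2 * π)
  have hαJ : α * (n / (n + 1) * J) = R := by simp only [α]; field_simp
  have hβ : 0 ≤ β := by
    refine div_nonneg (sub_nonneg.2 ?_) (by positivity)
    rwa [div_mul_eq_mul_div, mul_div_mul_right _ _ hJ.ne']
  refine ⟨fun t => α * (1 + cos (t - θ)) ^ n + β, by fun_prop, fun t _ => ?_, ?_, ?_, ?_⟩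
  · have := pow_nonneg (neg_le_iff_add_nonneg'.1 (neg_one_le_cos (t - θ))) n
    positivity
  · rw [integral_const_mul_add_const_mul (by fun_prop) continuous_cos,
      integral_one_add_cos_sub_pow_mul_cos, integral_cos, sin_two_pi, sin_zero]
    linear_combination cos θ * hαJ + ha
  · rw [integral_const_mul_add_const_mul (by fun_prop) continuous_sin,
      integral_one_add_cos_sub_pow_mul_sin, integral_sin, cos_two_pi, cos_zero]
    linear_combination sin θ * hαJ + hb
  · rw [integral_const_mul_add_const (by fun_prop), integral_one_add_cos_sub_pow, sub_zero,
      div_mul_cancel₀ _ (by positivity)]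
    ring
end

section
/- The set {a·cos + b·sin + c·1 : c > √(a² + b²)} ∪ {0} of functions in C[0, 2π] is exactly the image under S of the cone of nonnegative continuous functions, where S is the integral operator with kernel 1 + cos(s − t); consequently, S(C[0,2π]₊) is dense in (ran S) ∩ C[0,2π]₊ but not equal to it. -/
/-!
Expanding the kernel, `S f = a cos + b sin + c` with `(a, b, c) = (∫ f cos, ∫ f sin, ∫ f)`.
If `θ` is the polar angle of `(a, b)`, then `c - √(a² + b²) = ∫ f(t) (1 - cos (t - θ)) dt`, which
is positive for `f ≥ 0` unless `∫ f = 0`, because `1 - cos (· - θ)` vanishes only on a countable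
set. Conversely, the bump `(1 + cos (t - φ))ⁿ` has `√(a² + b²) / c = n / (n + 1)`, so a nonnegative
multiple of it plus a nonnegative constant realizes every `c > √(a² + b²)`.
-/

open Set MeasureTheory Real intervalIntegral Function
open scoped Interval

namespace CosineKernel

section Moments

variable {f : ℝ → ℝ} {a b : ℝ}

theorem integral_mul_cos_sub (hf : IntervalIntegrable f volume a b) (θ : ℝ) :
    ∫ t in a..b, f t * cos (t - θ) =
      cos θ * (∫ t in a..b, f t * cos t) + sin θ * ∫ t in a..b, f t * sin t := by
  have hcos := hf.mul_continuousOn continuous_cos.continuousOn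
  have hsin := hf.mul_continuousOn continuous_sin.continuousOn
  rw [← intervalIntegral.integral_const_mul, ← intervalIntegral.integral_const_mul,
    ← integral_add (hcos.const_mul _) (hsin.const_mul _)]
  refine integral_congr fun t _ => ?_
  simp only [cos_sub]
  ring

theorem integral_mul_one_add_cos_sub (hf : IntervalIntegrable f volume a b) (s : ℝ) :
    ∫ t in a..b, f t * (1 + cos (s - t)) =
      (∫ t in a..b, f t * cos t) * cos s + (∫ t in a..b, f t * sin t) * sin s +
        ∫ t in a..b, f t := by
  have hcos := hf.mul_continuousOn (by fun_prop : ContinuousOn (fun t => cos (t - s)) _)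
  simp_rw [mul_one_add, ← cos_neg (s - _), neg_sub]
  rw [integral_add hf hcos, integral_mul_cos_sub hf]
  ring

theorem integral_mul_cos_sub_le (hab : a ≤ b) (hf : IntervalIntegrable f volume a b)
    (hf₀ : ∀ t ∈ Icc a b, 0 ≤ f t) (θ : ℝ) :
    ∫ t in a..b, f t * cos (t - θ) ≤ ∫ t in a..b, f t :=
  integral_mono_on hab (hf.mul_continuousOn (by fun_prop)) hf fun t ht =>
    mul_le_of_le_one_right (hf₀ t ht) (cos_le_one _)

theorem volume_setOf_cos_sub_eq_one (θ : ℝ) : volume {t : ℝ | cos (t - θ) = 1} = 0 := by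
  refine Countable.measure_zero ((countable_range fun n : ℤ => n * (2 * π) + θ).mono ?_) _
  intro t ht
  obtain ⟨n, hn⟩ := (cos_eq_one_iff _).1 ht
  exact ⟨n, by simp only [hn]; ring⟩

theorem integral_mul_cos_sub_lt (hab : a ≤ b) (hf : IntervalIntegrable f volume a b)
    (hf₀ : ∀ t ∈ Icc a b, 0 ≤ f t) (hpos : 0 < ∫ t in a..b, f t) (θ : ℝ) :
    ∫ t in a..b, f t * cos (t - θ) < ∫ t in a..b, f t := by
  set g := fun t => f t * (1 - cos (t - θ))
  have hcos := hf.mul_continuousOn (by fun_prop : ContinuousOn (fun t => cos (t - θ)) _)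
  have hnonneg : ∀ h : ℝ → ℝ, (∀ t ∈ Icc a b, 0 ≤ h t) → 0 ≤ᵐ[volume.restrict (Ι a b)] h :=
    fun h hh => (ae_restrict_iff' measurableSet_uIoc).2 <| .of_forall fun t ht =>
      hh t (Ioc_subset_Icc_self (uIoc_of_le hab ▸ ht))
  obtain ⟨hab', hsupp⟩ := (integral_pos_iff_support_of_nonneg_ae' (hnonneg f hf₀) hf).1 hpos
  have hg : 0 < ∫ t in a..b, g t := by
    refine (integral_pos_iff_support_of_nonneg_ae'
      (hnonneg g fun t ht => mul_nonneg (hf₀ t ht) (sub_nonneg.2 (cos_le_one _)))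
      (hf.sub hcos |>.congr ?_)).2 ⟨hab', hsupp.trans_le ?_⟩
    · exact fun t _ => by simp only [g]; ring
    calc volume (support f ∩ Ioc a b)
        = volume ((support f ∩ Ioc a b) \ {t | cos (t - θ) = 1}) :=
          (measure_sdiff_null (volume_setOf_cos_sub_eq_one θ)).symm
      _ ≤ volume (support g ∩ Ioc a b) := measure_mono fun t ⟨⟨hft, ht⟩, hcost⟩ =>
          ⟨mul_ne_zero hft (sub_ne_zero.2 (Ne.symm hcost)), ht⟩
  have : ∫ t in a..b, g t = (∫ t in a..b, f t) - ∫ t in a..b, f t * cos (t - θ) := by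
    rw [← integral_sub hf hcos]
    exact integral_congr fun t _ => by simp only [g]; ring
  linarith

end Moments

theorem exists_eq_sqrt_mul_cos_and_eq_sqrt_mul_sin (x y : ℝ) :
    ∃ θ, x = √(x ^ 2 + y ^ 2) * cos θ ∧ y = √(x ^ 2 + y ^ 2) * sin θ := by
  have hz := Complex.norm_eq_sqrt_sq_add_sq ⟨x, y⟩
  exact ⟨Complex.arg ⟨x, y⟩, by rw [← hz, Complex.norm_mul_cos_arg],
    by rw [← hz, Complex.norm_mul_sin_arg]⟩

theorem hasDerivAt_one_add_cos_pow_mul_sin (n : ℕ) (u : ℝ) :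
    HasDerivAt (fun u => (1 + cos u) ^ n * sin u)
      ((1 + cos u) ^ n * ((n + 1) * cos u - n)) u := by
  refine (((hasDerivAt_cos u).const_add 1).fun_pow n |>.fun_mul (hasDerivAt_sin u)).congr_deriv ?_
  rcases n with _ | n
  · simp
  · push_cast
    simp only [pow_succ]
    linear_combination -(n + 1) * (1 + cos u) ^ n * sin_sq_add_cos_sq u

theorem succ_mul_integral_one_add_cos_pow_mul_cos (n : ℕ) :
    (n + 1) * ∫ u in (0 : ℝ)..2 * π, (1 + cos u) ^ n * cos u =
      n * ∫ u in (0 : ℝ)..2 * π, (1 + cos u) ^ n := by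
  rw [← intervalIntegral.integral_const_mul, ← intervalIntegral.integral_const_mul, ← sub_eq_zero,
    ← integral_sub (Continuous.intervalIntegrable (by fun_prop) _ _)
      (Continuous.intervalIntegrable (by fun_prop) _ _)]
  calc _ = ∫ u in (0 : ℝ)..2 * π, (1 + cos u) ^ n * ((n + 1) * cos u - n) :=
        integral_congr fun u _ => by ring
    _ = 0 := by
        rw [integral_eq_sub_of_hasDerivAt (fun u _ => hasDerivAt_one_add_cos_pow_mul_sin n u)
          (Continuous.intervalIntegrable (by fun_prop) _ _)]
        simp

theorem integral_one_add_cos_pow_mul_sin (n : ℕ) :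
    ∫ u in (0 : ℝ)..2 * π, (1 + cos u) ^ n * sin u = 0 := by
  have h := integral_comp_mul_deriv (a := 0) (b := 2 * π) (g := fun x => x ^ n)
    (fun u _ => (hasDerivAt_cos u).const_add 1) (by fun_prop) (by fun_prop)
  simp only [cos_two_pi, cos_zero, integral_same, comp_apply, mul_neg,
    intervalIntegral.integral_neg, neg_eq_zero] at h
  exact h

theorem integral_one_add_cos_pow_pos (n : ℕ) :
    0 < ∫ u in (0 : ℝ)..2 * π, (1 + cos u) ^ n := by
  have h := integral_lt_integral_of_continuousOn_of_le_of_exists_lt (by positivity)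
    continuousOn_const (by fun_prop : ContinuousOn (fun u => (1 + cos u) ^ n) (Icc 0 (2 * π)))
    (fun u _ => pow_nonneg (by linarith [neg_one_le_cos u]) n)
    ⟨0, left_mem_Icc.2 (by positivity), by norm_num⟩
  simpa using h

noncomputable def S (f : ℝ → ℝ) (s : ℝ) : ℝ := ∫ t in (0 : ℝ)..2 * π, f t * (1 + cos (s - t))

section Operator

variable {f : ℝ → ℝ}

theorem S_eq (hf : IntervalIntegrable f volume 0 (2 * π)) :
    S f = fun s => (∫ t in (0 : ℝ)..2 * π, f t * cos t) * cos s +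
      (∫ t in (0 : ℝ)..2 * π, f t * sin t) * sin s + ∫ t in (0 : ℝ)..2 * π, f t :=
  funext (integral_mul_one_add_cos_sub hf)

theorem S_eq_or_eq_zero (hf : IntervalIntegrable f volume 0 (2 * π))
    (hf₀ : ∀ t ∈ Icc 0 (2 * π), 0 ≤ f t) :
    (∃ a b c : ℝ, √(a ^ 2 + b ^ 2) < c ∧ S f = fun s => a * cos s + b * sin s + c) ∨ S f = 0 := by
  have h2π : (0 : ℝ) ≤ 2 * π := by positivity
  rw [S_eq hf]
  set a := ∫ t in (0 : ℝ)..2 * π, f t * cos t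
  set b := ∫ t in (0 : ℝ)..2 * π, f t * sin t
  obtain ⟨θ, ha, hb⟩ := exists_eq_sqrt_mul_cos_and_eq_sqrt_mul_sin a b
  set ρ := √(a ^ 2 + b ^ 2)
  have hθ : ∫ t in (0 : ℝ)..2 * π, f t * cos (t - θ) = ρ := by
    rw [integral_mul_cos_sub hf]
    linear_combination cos θ * ha + sin θ * hb + ρ * sin_sq_add_cos_sq θ
  rcases (integral_nonneg (μ := volume) h2π hf₀).eq_or_lt with hc | hc
  · have hρ : ρ = 0 :=
      le_antisymm (by linarith [integral_mul_cos_sub_le h2π hf hf₀ θ]) (sqrt_nonneg _)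
    have ha₀ : a = 0 := by rw [ha, hρ, zero_mul]
    have hb₀ : b = 0 := by rw [hb, hρ, zero_mul]
    right
    rw [ha₀, hb₀, ← hc]
    ext
    simp
  · exact Or.inl ⟨a, b, _, hθ.symm.trans_lt (integral_mul_cos_sub_lt h2π hf hf₀ hc θ), rfl⟩

theorem S_comp_sub {k : ℝ → ℝ} (hk : Periodic k (2 * π)) (φ s : ℝ) :
    S (fun t => k (t - φ)) s = S k (s - φ) := by
  set g := fun u => k u * (1 + cos (s - φ - u))
  have hg : Periodic g (2 * π) := fun u => by
    simp only [g, hk u, sub_add_eq_sub_sub, cos_sub_two_pi]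
  calc S (fun t => k (t - φ)) s = ∫ t in (0 : ℝ)..2 * π, g (t - φ) := by
        simp only [S, g, sub_sub_sub_cancel_right]
    _ = ∫ t in (-φ)..(-φ + 2 * π), g t := by rw [integral_comp_sub_right, zero_sub, sub_eq_neg_add]
    _ = S k (s - φ) := by rw [hg.intervalIntegral_add_eq (-φ) 0, zero_add]; rfl

theorem S_const_mul_add (hf : IntervalIntegrable f volume 0 (2 * π)) (l μ s : ℝ) :
    S (fun t => l * f t + μ) s = l * S f s + 2 * π * μ := by
  have hconst : ∫ t in (0 : ℝ)..2 * π, μ * (1 + cos (s - t)) = 2 * π * μ := by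
    rw [intervalIntegral.integral_const_mul, integral_add intervalIntegrable_const
      (Continuous.intervalIntegrable (by fun_prop) _ _), integral_comp_sub_left (fun t => cos t) s]
    simp [integral_cos, mul_comm μ]
  simp only [S, add_mul, mul_assoc]
  rw [integral_add ((hf.mul_continuousOn (by fun_prop)).const_mul l)
    (Continuous.intervalIntegrable (by fun_prop) _ _), intervalIntegral.integral_const_mul, hconst]
  ring

theorem S_one_add_cos_pow (n : ℕ) (s : ℝ) :
    S (fun t => (1 + cos t) ^ n) s = (∫ u in (0 : ℝ)..2 * π, (1 + cos u) ^ n * cos u) * cos s +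
      ∫ u in (0 : ℝ)..2 * π, (1 + cos u) ^ n := by
  rw [S_eq (Continuous.intervalIntegrable (by fun_prop) _ _), integral_one_add_cos_pow_mul_sin]
  ring

theorem exists_nonneg_S_eq {a b c : ℝ} (h : √(a ^ 2 + b ^ 2) < c) :
    ∃ f : ℝ → ℝ, Continuous f ∧ (∀ t, 0 ≤ f t) ∧ S f = fun s => a * cos s + b * sin s + c := by
  obtain ⟨φ, ha, hb⟩ := exists_eq_sqrt_mul_cos_and_eq_sqrt_mul_sin a b
  set ρ := √(a ^ 2 + b ^ 2)
  have hρ : 0 ≤ ρ := sqrt_nonneg _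
  -- The bump below has `J / I = n / (n + 1)`, so its constant term `ρ I / J` is `< c`.
  obtain ⟨n, hn⟩ := exists_nat_gt (ρ / (c - ρ))
  have hn₀ : (0 : ℝ) < n := (div_nonneg hρ (sub_pos.2 h).le).trans_lt hn
  have hρn : ρ * (n + 1) < c * n := by
    rw [div_lt_iff₀ (sub_pos.2 h)] at hn
    linarith
  set I := ∫ u in (0 : ℝ)..2 * π, (1 + cos u) ^ n
  set J := ∫ u in (0 : ℝ)..2 * π, (1 + cos u) ^ n * cos u
  have hI : 0 < I := integral_one_add_cos_pow_pos n
  have hJI : (n + 1) * J = n * I := succ_mul_integral_one_add_cos_pow_mul_cos n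
  have hJ : 0 < J := pos_of_mul_pos_right (hJI ▸ mul_pos hn₀ hI) (by positivity)
  set l := ρ / J
  have hlI : l * I ≤ c := by
    rw [div_mul_eq_mul_div, div_le_iff₀ hJ]
    nlinarith
  set μ := (c - l * I) / (2 * π)
  have hμ : 0 ≤ μ := div_nonneg (sub_nonneg.2 hlI) (by positivity)
  refine ⟨fun t => l * (1 + cos (t - φ)) ^ n + μ, by fun_prop, fun t => ?_, funext fun s => ?_⟩
  · exact add_nonneg (mul_nonneg (div_nonneg hρ hJ.le)
      (pow_nonneg (by linarith [neg_one_le_cos (t - φ)]) n)) hμ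
  · have hlJ : l * J = ρ := div_mul_cancel₀ ρ hJ.ne'
    have hμc : l * I + 2 * π * μ = c := by
      simp only [μ]
      field_simp
      ring
    rw [S_comp_sub (k := fun u => l * (1 + cos u) ^ n + μ) (fun u => by simp) φ s,
      S_const_mul_add (Continuous.intervalIntegrable (by fun_prop) _ _), S_one_add_cos_pow]
    change l * (J * cos (s - φ) + I) + 2 * π * μ = _
    rw [cos_sub, ha, hb]
    linear_combination (cos s * cos φ + sin s * sin φ) * hlJ + hμc

end Operator

theorem cos_sin_add_const_coeffs_eq {a b c a' b' c' : ℝ}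
    (h : (fun s => a * cos s + b * sin s + c) = fun s => a' * cos s + b' * sin s + c') :
    a = a' ∧ b = b' ∧ c = c' := by
  have h₀ := congrFun h 0
  have hπ := congrFun h π
  have hπ₂ := congrFun h (π / 2)
  simp only [cos_zero, sin_zero, cos_pi, sin_pi, cos_pi_div_two, sin_pi_div_two] at h₀ hπ hπ₂
  refine ⟨?_, ?_, ?_⟩ <;> linarith

def imagePositiveCone : Set (ℝ → ℝ) :=
  {g | ∃ f : ℝ → ℝ, ContinuousOn f (Icc 0 (2 * π)) ∧ (∀ t ∈ Icc 0 (2 * π), 0 ≤ f t) ∧ g = S f}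

theorem imagePositiveCone_eq : imagePositiveCone =
    {g | ∃ a b c : ℝ, √(a ^ 2 + b ^ 2) < c ∧ g = fun s => a * cos s + b * sin s + c} ∪ {0} := by
  ext g
  constructor
  · rintro ⟨f, hf, hf₀, rfl⟩
    exact S_eq_or_eq_zero (hf.intervalIntegrable_of_Icc (by positivity)) hf₀
  · rintro (⟨a, b, c, h, rfl⟩ | rfl)
    · obtain ⟨f, hf, hf₀, hSf⟩ := exists_nonneg_S_eq h
      exact ⟨f, hf.continuousOn, fun t _ => hf₀ t, hSf.symm⟩
    · exact ⟨0, continuousOn_const, fun _ _ => le_rfl, by ext; simp [S]⟩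

end CosineKernel

open CosineKernel

theorem S_image_of_positive_cone :
    ({g : ℝ → ℝ | ∃ f : ℝ → ℝ, ContinuousOn f (Set.Icc (0 : ℝ) (2 * Real.pi)) ∧
          (∀ t ∈ Set.Icc (0 : ℝ) (2 * Real.pi), 0 ≤ f t) ∧
          g = fun s => ∫ t in (0 : ℝ)..(2 * Real.pi), f t * (1 + Real.cos (s - t))} =
        {g : ℝ → ℝ | ∃ a b c : ℝ, Real.sqrt (a ^ 2 + b ^ 2) < c ∧
          g = fun s => a * Real.cos s + b * Real.sin s + c} ∪ {0}) ∧
    (∀ g ∈ {g : ℝ → ℝ | ∃ a b c : ℝ, Real.sqrt (a ^ 2 + b ^ 2) ≤ c ∧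
          g = fun s => a * Real.cos s + b * Real.sin s + c},
      ∀ ε > (0 : ℝ),
        ∃ h ∈ {g : ℝ → ℝ | ∃ f : ℝ → ℝ,
            ContinuousOn f (Set.Icc (0 : ℝ) (2 * Real.pi)) ∧
            (∀ t ∈ Set.Icc (0 : ℝ) (2 * Real.pi), 0 ≤ f t) ∧
            g = fun s => ∫ t in (0 : ℝ)..(2 * Real.pi), f t * (1 + Real.cos (s - t))},
          ∀ s ∈ Set.Icc (0 : ℝ) (2 * Real.pi), |g s - h s| < ε) ∧
    ({g : ℝ → ℝ | ∃ f : ℝ → ℝ, ContinuousOn f (Set.Icc (0 : ℝ) (2 * Real.pi)) ∧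
          (∀ t ∈ Set.Icc (0 : ℝ) (2 * Real.pi), 0 ≤ f t) ∧
          g = fun s => ∫ t in (0 : ℝ)..(2 * Real.pi), f t * (1 + Real.cos (s - t))} ≠
        {g : ℝ → ℝ | ∃ a b c : ℝ, Real.sqrt (a ^ 2 + b ^ 2) ≤ c ∧
          g = fun s => a * Real.cos s + b * Real.sin s + c}) := by
  change imagePositiveCone = _ ∧ _ ∧ imagePositiveCone ≠ _
  refine ⟨imagePositiveCone_eq, ?_, fun heq => ?_⟩
  · rintro g ⟨a, b, c, h, rfl⟩ ε hε
    obtain ⟨f, hf, hf₀, hSf⟩ := exists_nonneg_S_eq (h.trans_lt (lt_add_of_pos_right c (half_pos hε)))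
    refine ⟨_, ⟨f, hf.continuousOn, fun t _ => hf₀ t, hSf.symm⟩, fun s _ => ?_⟩
    rw [show a * cos s + b * sin s + c - (a * cos s + b * sin s + (c + ε / 2)) = -(ε / 2) by ring,
      abs_neg, abs_of_pos (half_pos hε)]
    exact half_lt_self hε
  · have hmem : (fun s => 1 * cos s + 0 * sin s + 1) ∈ imagePositiveCone :=
      heq ▸ ⟨1, 0, 1, by norm_num, rfl⟩
    rcases imagePositiveCone_eq ▸ hmem with ⟨a, b, c, h, hcoeffs⟩ | hzero
    · obtain ⟨rfl, rfl, rfl⟩ := cos_sin_add_const_coeffs_eq hcoeffs.symm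
      norm_num at h
    · simpa using congrFun hzero 0
end
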